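/- Let μ^N be a probability measure on ℝ^d×ℝ^d with spatial marginal ρ^N, let ρ be a probability density on ℝ^d, and let u ∈ (L^∞ ∩ Lip)(ℝ^d;ℝ^d). Then the bounded Lipschitz distance between the first velocity moment of μ^N and ρu satisfies: d_BL( ∫_{ℝ^d} v μ^N(·,dv), ρu ) ≤ ( ∫_{ℝ^d×ℝ^d} |v − u(x)|² μ^N(dx,dv) )^{1/2} + C d_BL(ρ^N, ρ), where C > 0 depends only on ‖u‖_{L^∞} and ‖u‖_{Lip}. -/

import Mathlib

/-!
Test the momentum against `φ(x) e_i` and split `v_i = (v - u(x))_i + u_i(x)`. The first part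
is at most `∫ |v - u(x)| dμ^N ≤ (∫ |v - u(x)|² dμ^N)^{1/2}` by Cauchy–Schwarz. The second part
depends on `x` only, so it is the integral of `φ u_i` against `ρ^N - ρ`; since `φ u_i` is
bounded by `‖u‖_∞` and Lipschitz with constant `‖u‖_∞ + Lip(u)`, rescaling it to a unit
bounded-Lipschitz test function costs the factor `C = ‖u‖_∞ + Lip(u) + 1`.
-/

open MeasureTheory Set Finset
open scoped ENNReal

noncomputable section

def dBL {α : Type*} [MeasurableSpace α] [PseudoEMetricSpace α]
    (μ ν : Measure α) : ℝ :=
  sSup { r : ℝ | ∃ φ : α → ℝ, (∀ z, |φ z| ≤ 1) ∧ LipschitzWith 1 φ ∧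
    r = |(∫ z, φ z ∂μ) - ∫ z, φ z ∂ν| }

/-- The bounded Lipschitz distance between the (vector-valued) first velocity moment
`∫ v μ^N(·,dv)` of a phase-space measure `μ^N` and the momentum `ρ u`, applied
componentwise: the supremum over components `i` and over bounded Lipschitz test
functions `φ` of `|∫ φ(x) v_i μ^N(dx,dv) − ∫ φ(x) ρ(x) u_i(x) dx|`. -/
def dBLmom1 {d : ℕ} (μ : Measure (EuclideanSpace ℝ (Fin d) × EuclideanSpace ℝ (Fin d)))
    (ρ : EuclideanSpace ℝ (Fin d) → ℝ) (u : EuclideanSpace ℝ (Fin d) → EuclideanSpace ℝ (Fin d)) :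
    ℝ :=
  sSup { r : ℝ | ∃ i : Fin d, ∃ φ : EuclideanSpace ℝ (Fin d) → ℝ,
    (∀ z, |φ z| ≤ 1) ∧ LipschitzWith 1 φ ∧
    r = |(∫ z, φ z.1 * z.2 i ∂μ) - ∫ y, φ y * (ρ y * u y i)| }

open scoped NNReal

section dBL

variable {α : Type*} [MeasurableSpace α] [PseudoEMetricSpace α]
  (μ ν : Measure α) [IsFiniteMeasure μ] [IsFiniteMeasure ν]

lemma bddAbove_dBL_set :
    BddAbove { r : ℝ | ∃ φ : α → ℝ, (∀ z, |φ z| ≤ 1) ∧ LipschitzWith 1 φ ∧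
      r = |(∫ z, φ z ∂μ) - ∫ z, φ z ∂ν| } := by
  refine ⟨μ.real univ + ν.real univ, ?_⟩
  rintro _ ⟨φ, hφ, -, rfl⟩
  have bound (m : Measure α) [IsFiniteMeasure m] : |∫ z, φ z ∂m| ≤ m.real univ := by
    simpa using norm_integral_le_of_norm_le_const (μ := m) (f := φ) (C := 1) (ae_of_all _ hφ)
  exact (abs_sub _ _).trans (add_le_add (bound μ) (bound ν))

lemma abs_integral_sub_le_dBL {φ : α → ℝ} (hφ : ∀ z, |φ z| ≤ 1) (hφL : LipschitzWith 1 φ) :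
    |(∫ z, φ z ∂μ) - ∫ z, φ z ∂ν| ≤ dBL μ ν :=
  le_csSup (bddAbove_dBL_set μ ν) ⟨φ, hφ, hφL, rfl⟩

lemma dBL_nonneg : 0 ≤ dBL μ ν :=
  (abs_nonneg _).trans <| abs_integral_sub_le_dBL μ ν (φ := fun _ => 0) (by simp)
    (LipschitzWith.const' 0)

lemma abs_integral_sub_le_mul_dBL {ψ : α → ℝ} {C : ℝ≥0} (hC : 0 < C)
    (hψ : ∀ z, |ψ z| ≤ C) (hψL : LipschitzWith C ψ) :
    |(∫ z, ψ z ∂μ) - ∫ z, ψ z ∂ν| ≤ C * dBL μ ν := by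
  have hC' : (0 : ℝ) < C := hC
  have h := abs_integral_sub_le_dBL μ ν (φ := fun z => (C : ℝ)⁻¹ * ψ z)
    (fun z => by rw [abs_mul, abs_inv, abs_of_pos hC', inv_mul_le_iff₀ hC', mul_one]; exact hψ z)
    (by simpa [Function.comp_def, inv_mul_cancel₀ hC.ne'] using
      (lipschitzWith_smul (C⁻¹ : ℝ)).comp hψL)
  rwa [integral_const_mul, integral_const_mul, ← mul_sub, abs_mul, abs_inv, abs_of_pos hC',
    inv_mul_le_iff₀ hC'] at h

end dBL

lemma LipschitzWith.mul_of_abs_le {α : Type*} [PseudoMetricSpace α] {f g : α → ℝ}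
    {Kf Kg A B : ℝ≥0} (hf : LipschitzWith Kf f) (hg : LipschitzWith Kg g)
    (hfA : ∀ x, |f x| ≤ A) (hgB : ∀ x, |g x| ≤ B) :
    LipschitzWith (A * Kg + B * Kf) fun x => f x * g x := by
  refine LipschitzWith.of_dist_le_mul fun x y => ?_
  have hfxy := hf.dist_le_mul x y
  have hgxy := hg.dist_le_mul x y
  rw [Real.dist_eq] at hfxy hgxy ⊢
  calc |f x * g x - f y * g y| = |f x * (g x - g y) + g y * (f x - f y)| := by
        congr 1
        ring
    _ ≤ |f x| * |g x - g y| + |g y| * |f x - f y| := by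
      rw [← abs_mul, ← abs_mul]
      exact abs_add_le _ _
    _ ≤ A * (Kg * dist x y) + B * (Kf * dist x y) :=
      add_le_add (mul_le_mul (hfA x) hgxy (abs_nonneg _) A.2)
        (mul_le_mul (hgB y) hfxy (abs_nonneg _) B.2)
    _ = _ := by push_cast; ring

lemma EuclideanSpace.lipschitzWith_apply {ι : Type*} [Fintype ι] (i : ι) :
    LipschitzWith 1 fun x : EuclideanSpace ℝ ι => x i :=
  LipschitzWith.of_dist_le_mul fun x y => by simpa using PiLp.dist_apply_le x y i

lemma abs_mul_apply_le_and_lipschitzWith {α ι : Type*} [PseudoMetricSpace α] [Fintype ι]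
    {φ : α → ℝ} {u : α → EuclideanSpace ℝ ι} {B L : ℝ≥0} (hφ : ∀ x, |φ x| ≤ 1)
    (hφL : LipschitzWith 1 φ) (hu : ∀ x, ‖u x‖ ≤ B) (huL : LipschitzWith L u) (i : ι) :
    (∀ x, |φ x * u x i| ≤ B) ∧ LipschitzWith (B + L) fun x => φ x * u x i := by
  have hui (x) : |u x i| ≤ B := (PiLp.norm_apply_le (u x) i).trans (hu x)
  refine ⟨fun x => ?_, ?_⟩
  · rw [abs_mul, ← one_mul (B : ℝ)]
    exact mul_le_mul (hφ x) (hui x) (abs_nonneg _) zero_le_one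
  · exact (hφL.mul_of_abs_le (A := 1) ((EuclideanSpace.lipschitzWith_apply i).comp huL)
      (by simpa using hφ) hui).weaken (le_of_eq (by ring))

lemma integral_le_sqrt_integral_sq {Ω : Type*} [MeasurableSpace Ω] {μ : Measure Ω}
    [IsProbabilityMeasure μ] {X : Ω → ℝ} (hX : MemLp X 2 μ) :
    ∫ x, X x ∂μ ≤ √(∫ x, X x ^ 2 ∂μ) := by
  have hvar := ProbabilityTheory.variance_nonneg X μ
  rw [ProbabilityTheory.variance_eq_sub hX] at hvar
  exact (le_abs_self _).trans <|
    Real.abs_le_sqrt (by simpa only [Pi.pow_apply, sub_nonneg] using hvar)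

lemma abs_integral_mul_apply_le_sqrt_integral_norm_sq {Ω ι : Type*} [MeasurableSpace Ω]
    [Fintype ι] {μ : Measure Ω} [IsProbabilityMeasure μ] {φ : Ω → ℝ}
    {w : Ω → EuclideanSpace ℝ ι} (hφ : ∀ x, |φ x| ≤ 1) (hw : MemLp w 2 μ) (i : ι) :
    |∫ x, φ x * w x i ∂μ| ≤ √(∫ x, ‖w x‖ ^ 2 ∂μ) := by
  have hpt (x) : ‖φ x * w x i‖ ≤ ‖w x‖ := by
    rw [norm_mul, ← one_mul ‖w x‖]
    exact mul_le_mul (hφ x) (PiLp.norm_apply_le (w x) i) (norm_nonneg _) zero_le_one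
  calc |∫ x, φ x * w x i ∂μ| ≤ ∫ x, ‖w x‖ ∂μ :=
        norm_integral_le_of_norm_le (hw.integrable one_le_two).norm (ae_of_all _ hpt)
    _ ≤ √(∫ x, ‖w x‖ ^ 2 ∂μ) := integral_le_sqrt_integral_sq hw.norm

lemma integral_withDensity_ofReal {α : Type*} [MeasurableSpace α] {μ : Measure α} {ρ : α → ℝ}
    (hρ : AEMeasurable ρ μ) (hρ0 : ∀ x, 0 ≤ ρ x) (g : α → ℝ) :
    ∫ x, g x ∂μ.withDensity (fun x => ENNReal.ofReal (ρ x)) = ∫ x, ρ x * g x ∂μ := by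
  rw [integral_withDensity_eq_integral_toReal_smul₀ hρ.ennreal_ofReal
    (ae_of_all _ fun _ => ENNReal.ofReal_lt_top)]
  simp only [ENNReal.toReal_ofReal (hρ0 _), smul_eq_mul]

lemma integral_mul_snd_apply_eq_add {X ι : Type*} [MeasurableSpace X] [Fintype ι]
    {μ : Measure (X × EuclideanSpace ℝ ι)} [IsFiniteMeasure μ] {φ : X → ℝ}
    {u : X → EuclideanSpace ℝ ι} {B : ℝ} (hφ : Measurable φ) (hφ1 : ∀ x, |φ x| ≤ 1)
    (hu : Measurable u) (huB : ∀ x, ‖u x‖ ≤ B) (hv : Integrable Prod.snd μ) (i : ι) :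
    ∫ z, φ z.1 * z.2 i ∂μ
      = ∫ z, φ z.1 * (z.2 - u z.1) i ∂μ + ∫ x, φ x * u x i ∂μ.map Prod.fst := by
  have hψ : Integrable (fun x => φ x * u x i) (μ.map Prod.fst) :=
    Integrable.of_bound (by fun_prop) B <| ae_of_all _ fun x => by
      rw [norm_mul, ← one_mul B]
      exact mul_le_mul (hφ1 x) ((PiLp.norm_apply_le (u x) i).trans (huB x)) (norm_nonneg _)
        zero_le_one
  have hvi : Integrable (fun z => z.2 i) μ := by
    simpa using (EuclideanSpace.proj i : EuclideanSpace ℝ ι →L[ℝ] ℝ).integrable_comp hv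
  have hvφ : Integrable (fun z => φ z.1 * z.2 i) μ :=
    hvi.bdd_mul (c := 1) (hφ.comp measurable_fst).aestronglyMeasurable
      (ae_of_all _ fun z => hφ1 z.1)
  have hψ' : Integrable (fun z => φ z.1 * u z.1 i) μ := hψ.comp_measurable measurable_fst
  calc ∫ z, φ z.1 * z.2 i ∂μ
      = ∫ z, (φ z.1 * z.2 i - φ z.1 * u z.1 i) ∂μ + ∫ z, φ z.1 * u z.1 i ∂μ := by
        rw [integral_sub hvφ hψ']
        ring
    _ = _ := by
      simp only [PiLp.sub_apply, mul_sub]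
      rw [integral_map measurable_fst.aemeasurable hψ.aestronglyMeasurable]

/-- convergence of the local moment: for a probability measure `μ^N`
on phase space with spatial marginal `ρ^N`, a probability density `ρ`, and a bounded
Lipschitz velocity field `u`,
`d_BL(∫ v μ^N(·,dv), ρu) ≤ (∫∫ |v−u(x)|² μ^N)^{1/2} + C d_BL(ρ^N, ρ)`,
with `C` depending only on `‖u‖_{L^∞}` and `‖u‖_{Lip}`. -/
theorem local_moment_convergence
    (d : ℕ) (Cu Lu : ℝ) :
    ∃ C : ℝ, 0 < C ∧
      ∀ (μ : Measure (EuclideanSpace ℝ (Fin d) × EuclideanSpace ℝ (Fin d))),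
        IsProbabilityMeasure μ →
        Integrable (fun z : EuclideanSpace ℝ (Fin d) × EuclideanSpace ℝ (Fin d) => ‖z.2‖ ^ 2) μ →
      ∀ (ρ : EuclideanSpace ℝ (Fin d) → ℝ),
        (∀ y, 0 ≤ ρ y) → Integrable ρ → (∫ y, ρ y) = 1 →
      ∀ (u : EuclideanSpace ℝ (Fin d) → EuclideanSpace ℝ (Fin d)),
        (∀ y, ‖u y‖ ≤ Cu) → LipschitzWith (Real.toNNReal Lu) u →
        dBLmom1 μ ρ u
          ≤ Real.sqrt (∫ z, ‖z.2 - u z.1‖ ^ 2 ∂μ)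
            + C * dBL (μ.map Prod.fst)
                (volume.withDensity (fun y => ENNReal.ofReal (ρ y))) := by
  set C : ℝ≥0 := Cu.toNNReal + Lu.toNNReal + 1
  refine ⟨C, by positivity, fun μ _ hv ρ hρ0 hρ _ u hu hLu => ?_⟩
  set ν := volume.withDensity fun y => ENNReal.ofReal (ρ y)
  have : IsFiniteMeasure ν := isFiniteMeasure_withDensity_ofReal hρ.2
  refine Real.sSup_le ?_ (add_nonneg (Real.sqrt_nonneg _) (mul_nonneg C.2 (dBL_nonneg _ _)))
  rintro _ ⟨i, φ, hφ, hφL, rfl⟩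
  have hv2 : MemLp Prod.snd 2 μ :=
    (memLp_two_iff_integrable_sq_norm measurable_snd.aestronglyMeasurable).2 hv
  have hw : MemLp (fun z => z.2 - u z.1) 2 μ := hv2.sub <|
    MemLp.of_bound (hLu.continuous.measurable.comp measurable_fst).aestronglyMeasurable Cu
      (ae_of_all _ fun z => hu z.1)
  obtain ⟨hψ, hψL⟩ := abs_mul_apply_le_and_lipschitzWith hφ hφL
    (fun y => (hu y).trans (Real.le_coe_toNNReal Cu)) hLu i
  have hν : ∫ y, φ y * (ρ y * u y i) = ∫ y, φ y * u y i ∂ν := by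
    rw [integral_withDensity_ofReal hρ.aemeasurable hρ0]
    congr with y
    ring
  rw [integral_mul_snd_apply_eq_add hφL.continuous.measurable hφ hLu.continuous.measurable hu
    (hv2.integrable one_le_two) i, hν, add_sub_assoc]
  exact (abs_add_le _ _).trans (add_le_add
    (abs_integral_mul_apply_le_sqrt_integral_norm_sq (fun z => hφ z.1) hw i)
    (abs_integral_sub_le_mul_dBL _ _ (by positivity)
      (fun y => (hψ y).trans (NNReal.coe_le_coe.2 (le_self_add.trans le_self_add)))
      (hψL.weaken le_self_add)))
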